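/- Suppose Condition 1 holds. For every θ ∈ ℝ^ϱ, every π ∈ Π(θ), and every η ∈ Δ^K, writing p̄ = E_{y∼η}[ρ(y)], the surrogate regret decomposes additively as Regret_{L_{Ω_T}}(θ, η) = [Ω(p̄) + Ω^*(θ + L^ρ π) − ⟨θ + L^ρ π, p̄⟩] + Σ_{t=1}^N π_t · Regret_ℓ(t, η), where the bracketed term (the Fenchel–Young loss of Ω evaluated at (θ + L^ρ π, p̄)) is nonnegative. -/

import Mathlib

open scoped BigOperators
noncomputable section

/-- Score/probability space: `ℝ^ϱ` with Euclidean structure. -/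
abbrev E (ϱ : ℕ) : Type := EuclideanSpace ℝ (Fin ϱ)

/-- Euclidean dot product `⟨θ, p⟩`. -/
def dot {ϱ : ℕ} (θ p : E ϱ) : ℝ := ∑ i, θ i * p i

/-- Fenchel conjugate of an extended-real-valued function:
`Ω^*(θ) = sup_{p ∈ dom Ω} ⟨θ, p⟩ − Ω(p)`. -/
def conj {ϱ : ℕ} (f : E ϱ → EReal) (θ : E ϱ) : EReal :=
  ⨆ p ∈ {q : E ϱ | f q ≠ ⊤}, (((dot θ p : ℝ) : EReal) - f p)

/-- Convexity for extended-real-valued functions. -/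
def ErealConvex {ϱ : ℕ} (f : E ϱ → EReal) : Prop :=
  ∀ p q : E ϱ, ∀ a b : ℝ, 0 ≤ a → 0 ≤ b → a + b = 1 →
    f (a • p + b • q) ≤ (a : EReal) * f p + (b : EReal) * f q

/-- `T(p) = − min_{t ∈ Ŷ} ⟨p, ℓ^ρ(t)⟩`. -/
def Tfun {ϱ N : ℕ} (ℓρ : Fin N → E ϱ) (p : E ϱ) : ℝ := - ⨅ t, dot p (ℓρ t)

/-- The convolutional negentropy `Ω_T = Ω + T`. -/
def OmegaT {ϱ N : ℕ} (Ω : E ϱ → EReal) (ℓρ : Fin N → E ϱ) (p : E ϱ) : EReal :=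
  Ω p + ((Tfun ℓρ p : ℝ) : EReal)

/-- Loss-matrix action: `L^ρ π = Σ_t π_t ℓ^ρ(t)`. -/
def Lrho {ϱ N : ℕ} (ℓρ : Fin N → E ϱ) (π : Fin N → ℝ) : E ϱ :=
  WithLp.toLp 2 (fun i => ∑ t, π t * ℓρ t i)

/-- Condition 1: Ω proper convex l.s.c., `conv(ρ(𝒴)) ⊆ dom Ω`, `dom Ω^* = ℝ^ϱ`. -/
def Condition1 {ϱ K : ℕ} (Ω : E ϱ → EReal) (ρ : Fin K → E ϱ) : Prop :=
  (∀ p, Ω p ≠ ⊥) ∧ (∃ p, Ω p ≠ ⊤) ∧ ErealConvex Ω ∧ LowerSemicontinuous Ω ∧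
  (convexHull ℝ (Set.range ρ) ⊆ {p : E ϱ | Ω p ≠ ⊤}) ∧ (∀ θ : E ϱ, conj Ω θ ≠ ⊤)

/-- `Π(θ) = argmin_{π ∈ Δ^N} Ω^*(θ + L^ρ π)`. -/
def Pii {ϱ N : ℕ} (Ω : E ϱ → EReal) (ℓρ : Fin N → E ϱ) (θ : E ϱ) : Set (Fin N → ℝ) :=
  {π | π ∈ stdSimplex ℝ (Fin N) ∧
       ∀ π' ∈ stdSimplex ℝ (Fin N), conj Ω (θ + Lrho ℓρ π) ≤ conj Ω (θ + Lrho ℓρ π')}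

/-- The convolutional Fenchel–Young loss `L_{Ω_T}(θ, y) = Ω_T^*(θ) + Ω_T(ρ(y)) − ⟨θ, ρ(y)⟩`. -/
def LossFY {ϱ N K : ℕ} (Ω : E ϱ → EReal) (ρ : Fin K → E ϱ) (ℓρ : Fin N → E ϱ)
    (θ : E ϱ) (y : Fin K) : ℝ :=
  (conj (OmegaT Ω ℓρ) θ).toReal + (OmegaT Ω ℓρ (ρ y)).toReal - dot θ (ρ y)

/-- Surrogate risk of the convolutional Fenchel–Young loss. -/
def RsurL {ϱ N K : ℕ} (Ω : E ϱ → EReal) (ρ : Fin K → E ϱ) (ℓρ : Fin N → E ϱ)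
    (θ : E ϱ) (η : Fin K → ℝ) : ℝ :=
  ∑ y, η y * LossFY Ω ρ ℓρ θ y

/-- Surrogate regret of the convolutional Fenchel–Young loss. -/
def RegSur {ϱ N K : ℕ} (Ω : E ϱ → EReal) (ρ : Fin K → E ϱ) (ℓρ : Fin N → E ϱ)
    (θ : E ϱ) (η : Fin K → ℝ) : ℝ :=
  RsurL Ω ρ ℓρ θ η - ⨅ θ' : E ϱ, RsurL Ω ρ ℓρ θ' η

/-- Target regret of a discrete prediction `t` under target loss `ℓ`. -/
def RegTar {N K : ℕ} (ℓ : Fin N → Fin K → ℝ) (t : Fin N) (η : Fin K → ℝ) : ℝ :=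
  (∑ y, η y * ℓ t y) - ⨅ t' : Fin N, ∑ y, η y * ℓ t' y

/-- Real-valued version of a finite Fenchel conjugate. -/
def starFn {ϱ : ℕ} (f : E ϱ → EReal) (θ : E ϱ) : ℝ := (conj f θ).toReal

section Basic
variable {ϱ N : ℕ}

lemma dot_add_left (θ ξ p : E ϱ) : dot (θ + ξ) p = dot θ p + dot ξ p := by
  simp [dot, add_mul, Finset.sum_add_distrib]

lemma dot_comm (θ p : E ϱ) : dot θ p = dot p θ := by
  simp [dot, mul_comm]

lemma dot_smul_left (a : ℝ) (θ p : E ϱ) : dot (a • θ) p = a * dot θ p := by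
  simp [dot, Finset.mul_sum, mul_assoc]

lemma dot_smul_add (a b : ℝ) (p q χ : E ϱ) :
    dot (a • p + b • q) χ = a * dot p χ + b * dot q χ := by
  rw [dot_add_left, dot_smul_left, dot_smul_left]

lemma dot_Lrho (p : E ϱ) (ℓρ : Fin N → E ϱ) (π : Fin N → ℝ) :
    dot p (Lrho ℓρ π) = ∑ t, π t * dot p (ℓρ t) := by
  simp only [dot, Lrho, PiLp.toLp_apply, Finset.mul_sum]
  rw [Finset.sum_comm]
  exact Finset.sum_congr rfl fun t _ => Finset.sum_congr rfl fun i _ => by ring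

lemma sum_apply' {κ : Type*} (s : Finset κ) (f : κ → E ϱ) (j : Fin ϱ) :
    (∑ i ∈ s, f i) j = ∑ i ∈ s, f i j := by
  induction s using Finset.cons_induction with
  | empty => rfl
  | cons a s ha ih => rw [Finset.sum_cons, Finset.sum_cons, ← ih]; rfl

lemma dot_sum_left {κ : Type*} [Fintype κ] (w : κ → ℝ) (z : κ → E ϱ) (χ : E ϱ) :
    dot (∑ y, w y • z y) χ = ∑ y, w y * dot (z y) χ := by
  simp only [dot, Finset.mul_sum]
  rw [Finset.sum_comm]
  congr 1; funext i
  rw [sum_apply', Finset.sum_mul]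
  congr 1; funext y
  show (w y • z y) i * χ i = w y * (z y i * χ i)
  simp [mul_assoc]

lemma dot_sum_right {κ : Type*} [Fintype κ] (w : κ → ℝ) (z : κ → E ϱ) (χ : E ϱ) :
    dot χ (∑ y, w y • z y) = ∑ y, w y * dot χ (z y) := by
  rw [dot_comm, dot_sum_left]
  simp [dot_comm]

-- Tfun basics
lemma exists_min_dot (hN : 0 < N) (ℓρ : Fin N → E ϱ) (p : E ϱ) :
    ∃ t₀, ∀ t, dot p (ℓρ t₀) ≤ dot p (ℓρ t) := by
  have : Nonempty (Fin N) := ⟨⟨0, hN⟩⟩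
  exact Finite.exists_min _

lemma ciInf_fin_eq {f : Fin N → ℝ} {t₀ : Fin N} (h : ∀ t, f t₀ ≤ f t) :
    ⨅ t, f t = f t₀ := by
  have : Nonempty (Fin N) := ⟨t₀⟩
  exact le_antisymm (ciInf_le (Set.Finite.bddBelow (Set.finite_range f)) t₀) (le_ciInf h)

lemma neg_Tfun_le (hN : 0 < N) (ℓρ : Fin N → E ϱ) (p : E ϱ) (t : Fin N) :
    - Tfun ℓρ p ≤ dot p (ℓρ t) := by
  have : Nonempty (Fin N) := ⟨⟨0, hN⟩⟩
  simpa [Tfun] using ciInf_le (Set.Finite.bddBelow (Set.finite_range _)) t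

lemma neg_Tfun_le_dot_Lrho (hN : 0 < N) (ℓρ : Fin N → E ϱ) (p : E ϱ)
    {π : Fin N → ℝ} (hπ : π ∈ stdSimplex ℝ (Fin N)) :
    - Tfun ℓρ p ≤ dot p (Lrho ℓρ π) := by
  rw [dot_Lrho]
  calc - Tfun ℓρ p = ∑ t, π t * (- Tfun ℓρ p) := by
        rw [← Finset.sum_mul, hπ.2, one_mul]
    _ ≤ ∑ t, π t * dot p (ℓρ t) :=
        Finset.sum_le_sum fun t _ => mul_le_mul_of_nonneg_left (neg_Tfun_le hN ℓρ p t) (hπ.1 t)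

lemma Tfun_convex (hN : 0 < N) (ℓρ : Fin N → E ϱ) (p q : E ϱ) {a b : ℝ}
    (ha : 0 ≤ a) (hb : 0 ≤ b) :
    Tfun ℓρ (a • p + b • q) ≤ a * Tfun ℓρ p + b * Tfun ℓρ q := by
  have : Nonempty (Fin N) := ⟨⟨0, hN⟩⟩
  have h : ∀ t, -(a * Tfun ℓρ p + b * Tfun ℓρ q) ≤ dot (a • p + b • q) (ℓρ t) := by
    intro t
    rw [dot_smul_add]
    have h1 := mul_le_mul_of_nonneg_left (neg_Tfun_le hN ℓρ p t) ha
    have h2 := mul_le_mul_of_nonneg_left (neg_Tfun_le hN ℓρ q t) hb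
    nlinarith
  have := le_ciInf h
  simp only [Tfun] at *
  linarith [this]

-- conj basics
lemma le_conj {f : E ϱ → EReal} {p : E ϱ} (θ : E ϱ) (h : f p ≠ ⊤) :
    ((dot θ p : ℝ) : EReal) - f p ≤ conj f θ :=
  le_iSup₂ (f := fun q (_ : f q ≠ ⊤) => ((dot θ q : ℝ) : EReal) - f q) p h

lemma conj_le {f : E ϱ → EReal} {θ : E ϱ} {b : EReal}
    (h : ∀ p, f p ≠ ⊤ → ((dot θ p : ℝ) : EReal) - f p ≤ b) : conj f θ ≤ b :=
  iSup₂_le h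
end Basic

section S2
variable {ϱ N : ℕ} {Ω : E ϱ → EReal} {ℓρ : Fin N → E ϱ}

lemma OmegaT_ne_bot (hbot : ∀ p, Ω p ≠ ⊥) (p : E ϱ) : OmegaT Ω ℓρ p ≠ ⊥ := by
  simp only [OmegaT]
  intro h
  rcases EReal.add_eq_bot_iff.1 h with h | h
  · exact hbot p h
  · exact EReal.coe_ne_bot _ h

lemma OmegaT_ne_top_iff (p : E ϱ) : OmegaT Ω ℓρ p ≠ ⊤ ↔ Ω p ≠ ⊤ := by
  simp only [OmegaT]
  constructor
  · intro h h'; rw [h'] at h; simp at h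
  · intro h h'
    cases hΩ : Ω p with
    | bot => rw [hΩ] at h'; simp [EReal.bot_add] at h'
    | top => exact h hΩ
    | coe u => rw [hΩ, ← EReal.coe_add] at h'; exact EReal.coe_ne_top _ h'

lemma OmegaT_eq_coe (hbot : ∀ p, Ω p ≠ ⊥) {p : E ϱ} (h : Ω p ≠ ⊤) :
    OmegaT Ω ℓρ p = (((Ω p).toReal + Tfun ℓρ p : ℝ) : EReal) := by
  rw [OmegaT, EReal.coe_add]
  congr 1
  exact (EReal.coe_toReal h (hbot p)).symm

lemma conj_ne_bot (hbot : ∀ p, Ω p ≠ ⊥) (hproper : ∃ p, Ω p ≠ ⊤) (θ : E ϱ) :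
    conj Ω θ ≠ ⊥ := by
  obtain ⟨p₀, hp₀⟩ := hproper
  have h := le_conj (f := Ω) θ hp₀
  rw [← EReal.coe_toReal hp₀ (hbot p₀)] at h
  have : ((dot θ p₀ - (Ω p₀).toReal : ℝ) : EReal) ≤ conj Ω θ := by
    rw [EReal.coe_sub]; exact h
  exact fun hb => by rw [hb] at this; exact (EReal.bot_lt_coe _).not_ge this

lemma conjOmegaT_le (hN : 0 < N) (hbot : ∀ p, Ω p ≠ ⊥) (θ : E ϱ)
    {π : Fin N → ℝ} (hπ : π ∈ stdSimplex ℝ (Fin N)) :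
    conj (OmegaT Ω ℓρ) θ ≤ conj Ω (θ + Lrho ℓρ π) := by
  refine conj_le fun p hp => ?_
  have hΩp : Ω p ≠ ⊤ := (OmegaT_ne_top_iff p).1 hp
  rw [OmegaT_eq_coe hbot hΩp]
  have key : dot θ p - ((Ω p).toReal + Tfun ℓρ p) ≤ dot (θ + Lrho ℓρ π) p - (Ω p).toReal := by
    rw [dot_add_left]
    have := neg_Tfun_le_dot_Lrho hN ℓρ p hπ
    rw [dot_comm p (Lrho ℓρ π)] at this
    linarith
  calc ((dot θ p : ℝ) : EReal) - ((((Ω p).toReal + Tfun ℓρ p : ℝ)) : EReal)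
      = (((dot θ p - ((Ω p).toReal + Tfun ℓρ p) : ℝ)) : EReal) := by rw [EReal.coe_sub]
    _ ≤ (((dot (θ + Lrho ℓρ π) p - (Ω p).toReal : ℝ)) : EReal) := by
        exact_mod_cast key
    _ = ((dot (θ + Lrho ℓρ π) p : ℝ) : EReal) - ((Ω p).toReal : EReal) := by rw [EReal.coe_sub]
    _ = ((dot (θ + Lrho ℓρ π) p : ℝ) : EReal) - Ω p := by rw [EReal.coe_toReal hΩp (hbot p)]
    _ ≤ conj Ω (θ + Lrho ℓρ π) := le_conj _ hΩp

lemma single_mem_stdSimplex' (hN : 0 < N) :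
    (fun t => if t = (⟨0, hN⟩ : Fin N) then (1:ℝ) else 0) ∈ stdSimplex ℝ (Fin N) := by
  constructor
  · intro t; dsimp only; split <;> norm_num
  · simp

lemma conjOmegaT_ne_top (hN : 0 < N) (hbot : ∀ p, Ω p ≠ ⊥)
    (hstar : ∀ θ : E ϱ, conj Ω θ ≠ ⊤) (θ : E ϱ) : conj (OmegaT Ω ℓρ) θ ≠ ⊤ := by
  have h := conjOmegaT_le (ℓρ := ℓρ) hN hbot θ (single_mem_stdSimplex' hN)
  exact fun ht => hstar _ (top_le_iff.1 (ht ▸ h))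

lemma conjOmegaT_ne_bot (hbot : ∀ p, Ω p ≠ ⊥) (hproper : ∃ p, Ω p ≠ ⊤) (θ : E ϱ) :
    conj (OmegaT Ω ℓρ) θ ≠ ⊥ := by
  obtain ⟨p₀, hp₀⟩ := hproper
  have hp₀' : OmegaT Ω ℓρ p₀ ≠ ⊤ := (OmegaT_ne_top_iff p₀).2 hp₀
  have h := le_conj (f := OmegaT Ω ℓρ) θ hp₀'
  rw [OmegaT_eq_coe hbot hp₀, ← EReal.coe_sub] at h
  exact fun hb => by rw [hb] at h; exact (EReal.bot_lt_coe _).not_ge h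
end S2

section S3
variable {ϱ N : ℕ} {Ω : E ϱ → EReal} {ℓρ : Fin N → E ϱ}

lemma toReal_le_of_le_coe {x : EReal} {r : ℝ} (h : x ≤ (r : EReal)) (hb : x ≠ ⊥) :
    x.toReal ≤ r := by
  have := EReal.toReal_le_toReal h hb (EReal.coe_ne_top r)
  rwa [EReal.toReal_coe] at this

lemma exists_pi_conj_le (hN : 0 < N) (hbot : ∀ p, Ω p ≠ ⊥) (hproper : ∃ p, Ω p ≠ ⊤)
    (hconv : ErealConvex Ω) (hstar : ∀ ξ : E ϱ, conj Ω ξ ≠ ⊤) (θ : E ϱ)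
    {ε : ℝ} (hε : 0 < ε) :
    ∃ π ∈ stdSimplex ℝ (Fin N), conj Ω (θ + Lrho ℓρ π)
      ≤ (((conj (OmegaT Ω ℓρ) θ).toReal + ε : ℝ) : EReal) := by
  classical
  set V : ℝ := (conj (OmegaT Ω ℓρ) θ).toReal with hV
  have hVc : ((V : ℝ) : EReal) = conj (OmegaT Ω ℓρ) θ :=
    EReal.coe_toReal (conjOmegaT_ne_top hN hbot hstar θ) (conjOmegaT_ne_bot hbot hproper θ)
  -- the coordinate functions
  set F : Fin N → E ϱ → ℝ := fun t p => dot θ p + dot p (ℓρ t) - (Ω p).toReal with hF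
  have hFinf : ∀ p, Ω p ≠ ⊤ → ∃ t, F t p ≤ V := by
    intro p hp
    obtain ⟨t₀, ht₀⟩ := exists_min_dot hN ℓρ p
    refine ⟨t₀, ?_⟩
    have h1 : ((dot θ p : ℝ) : EReal) - OmegaT Ω ℓρ p ≤ conj (OmegaT Ω ℓρ) θ :=
      le_conj θ ((OmegaT_ne_top_iff p).2 hp)
    rw [OmegaT_eq_coe hbot hp, ← EReal.coe_sub, ← hVc, EReal.coe_le_coe_iff] at h1
    have hT : Tfun ℓρ p = - dot p (ℓρ t₀) := by rw [Tfun, ciInf_fin_eq ht₀]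
    rw [hT] at h1
    simp only [hF]
    linarith
  -- the convex set A
  set W := EuclideanSpace ℝ (Fin N) with hW
  set A : Set W := {x | ∃ p, Ω p ≠ ⊤ ∧ ∀ t, x t ≤ F t p} with hA
  obtain ⟨p₀, hp₀⟩ := hproper
  have hx₀ : (WithLp.toLp 2 (fun t => F t p₀) : W) ∈ A := ⟨p₀, hp₀, fun t => le_refl _⟩
  have hAconv : Convex ℝ A := by
    intro x hx y hy a b ha hb hab
    obtain ⟨p, hp, hxp⟩ := hx
    obtain ⟨q, hq, hyq⟩ := hy
    have hcomb := hconv p q a b ha hb hab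
    rw [← EReal.coe_toReal hp (hbot p), ← EReal.coe_toReal hq (hbot q),
      ← EReal.coe_mul, ← EReal.coe_mul, ← EReal.coe_add] at hcomb
    have hptop : Ω (a • p + b • q) ≠ ⊤ :=
      fun h => (EReal.coe_ne_top _) (top_le_iff.1 (h ▸ hcomb))
    have htr : (Ω (a • p + b • q)).toReal ≤ a * (Ω p).toReal + b * (Ω q).toReal :=
      toReal_le_of_le_coe hcomb (hbot _)
    refine ⟨a • p + b • q, hptop, fun t => ?_⟩
    have hco : (a • x + b • y) t = a * x t + b * y t := rfl
    rw [hco]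
    have h1 := hxp t
    have h2 := hyq t
    have hdd : dot θ (a • p + b • q) = a * dot θ p + b * dot θ q := by
      rw [dot_comm, dot_smul_add, dot_comm p θ, dot_comm q θ]
    have hdd2 : dot (a • p + b • q) (ℓρ t) = a * dot p (ℓρ t) + b * dot q (ℓρ t) :=
      dot_smul_add a b p q (ℓρ t)
    simp only [hF] at h1 h2 ⊢
    rw [hdd, hdd2]
    nlinarith [mul_le_mul_of_nonneg_left h1 ha, mul_le_mul_of_nonneg_left h2 hb]
  -- A is contained in the closed set S
  set S : Set W := ⋃ t, {x : W | x t ≤ V} with hS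
  have hAS : A ⊆ S := by
    rintro x ⟨p, hp, hxp⟩
    obtain ⟨t, ht⟩ := hFinf p hp
    exact Set.mem_iUnion.2 ⟨t, le_trans (hxp t) ht⟩
  have hScl : IsClosed S := by
    refine isClosed_iUnion_of_finite fun t => ?_
    exact isClosed_le (by exact (continuous_apply t).comp (PiLp.continuous_ofLp (p := 2) (β := fun _ : Fin N => ℝ))) continuous_const
  set z : W := WithLp.toLp 2 (fun _ => V + ε) with hz
  have hzS : z ∉ S := by
    intro hzs
    obtain ⟨t, ht⟩ := Set.mem_iUnion.1 hzs
    simp only [Set.mem_setOf_eq, hz, PiLp.toLp_apply] at ht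
    linarith
  have hzcl : z ∉ closure A := fun h => hzS (closure_minimal hAS hScl h)
  obtain ⟨f, u, hfA, hfz⟩ :=
    geometric_hahn_banach_closed_point (hAconv.closure) isClosed_closure hzcl
  obtain ⟨w, hwrep⟩ : ∃ w : W, ∀ x : W, f x = ∑ t, w t * x t := by
    refine ⟨(InnerProductSpace.toDual ℝ W).symm f, fun x => ?_⟩
    have h := InnerProductSpace.toDual_symm_apply (𝕜 := ℝ) (E := W) (x := x) (y := f)
    rw [← h, PiLp.inner_apply]
    simp [RCLike.inner_apply, mul_comm]
  have hfx₀ : f (WithLp.toLp 2 (fun t => F t p₀)) < u := hfA _ (subset_closure hx₀)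
  -- nonnegativity of w
  have hwnn : ∀ t, 0 ≤ w t := by
    intro t
    by_contra hwt
    push_neg at hwt
    set s : ℝ := (u - f (WithLp.toLp 2 (fun t' => F t' p₀))) / (-(w t)) with hs
    have hspos : 0 < s := div_pos (by linarith) (by linarith)
    set x₁ : W := WithLp.toLp 2 (fun t' => F t' p₀) - s • EuclideanSpace.single t 1 with hx₁
    have hx₁A : x₁ ∈ A := by
      refine ⟨p₀, hp₀, fun t' => ?_⟩
      have : x₁ t' = F t' p₀ - s * (EuclideanSpace.single t (1:ℝ)) t' := rfl
      rw [this]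
      have : (0:ℝ) ≤ s * (EuclideanSpace.single t (1:ℝ)) t' := by
        refine mul_nonneg hspos.le ?_
        rw [EuclideanSpace.single_apply]
        split <;> norm_num
      linarith
    have hfx₁ : f x₁ < u := hfA _ (subset_closure hx₁A)
    have hfx₁' : f x₁ = f (WithLp.toLp 2 (fun t' => F t' p₀)) - s * w t := by
      rw [map_sub, map_smul]
      simp only [smul_eq_mul]
      congr 1
      rw [hwrep]
      rw [Finset.sum_eq_single t]
      · rw [EuclideanSpace.single_apply, if_pos rfl, mul_one]
      · intro b _ hb
        rw [EuclideanSpace.single_apply, if_neg hb, mul_zero]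
      · intro h; exact absurd (Finset.mem_univ t) h
    rw [hfx₁'] at hfx₁
    have : s * w t = -(u - f (WithLp.toLp 2 (fun t' => F t' p₀))) := by
      rw [hs, div_mul_eq_mul_div, div_eq_iff (by linarith : -w t ≠ 0)]
      ring
    rw [this] at hfx₁
    linarith
  have hfzval : f z = (∑ t, w t) * (V + ε) := by
    rw [hwrep]
    simp only [hz, PiLp.toLp_apply]
    rw [Finset.sum_mul]
  have hwsum : 0 < ∑ t, w t := by
    rcases lt_or_eq_of_le (Finset.sum_nonneg fun t _ => hwnn t) with h | h
    · exact h
    · exfalso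
      have hall : ∀ t ∈ Finset.univ, w t = 0 :=
        (Finset.sum_eq_zero_iff_of_nonneg fun t _ => hwnn t).1 h.symm
      have hf0 : ∀ x : W, f x = 0 := by
        intro x; rw [hwrep]
        exact Finset.sum_eq_zero fun t ht => by rw [hall t ht, zero_mul]
      rw [hf0] at hfz
      rw [hf0] at hfx₀
      linarith
  refine ⟨fun t => w t / (∑ t', w t'), ⟨fun t => div_nonneg (hwnn t) hwsum.le, ?_⟩, ?_⟩
  · rw [← Finset.sum_div, div_self hwsum.ne']
  · refine conj_le fun p hp => ?_
    have hxpA : (WithLp.toLp 2 (fun t => F t p) : W) ∈ A := ⟨p, hp, fun t => le_refl _⟩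
    have h1 : f (WithLp.toLp 2 (fun t => F t p)) < u := hfA _ (subset_closure hxpA)
    have h2 : (∑ t, w t * F t p) ≤ (∑ t, w t) * (V + ε) := by
      have hw := hwrep (WithLp.toLp 2 (fun t => F t p)); simp only [PiLp.toLp_apply] at hw
      rw [← hw, ← hfzval]
      exact le_of_lt (lt_trans h1 hfz)
    have h3 : (∑ t, (w t / (∑ t', w t')) * F t p) ≤ V + ε := by
      have : (∑ t, (w t / (∑ t', w t')) * F t p) = (∑ t, w t * F t p) / (∑ t', w t') := by
        rw [Finset.sum_div]
        exact Finset.sum_congr rfl fun t _ => by ring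
      rw [this, div_le_iff₀ hwsum]
      linarith [h2]
    have h4 : (∑ t, (w t / (∑ t', w t')) * F t p)
        = dot (θ + Lrho ℓρ (fun t => w t / (∑ t', w t'))) p - (Ω p).toReal := by
      have hsum1 : (∑ t, w t / (∑ t', w t')) = 1 := by
        rw [← Finset.sum_div, div_self hwsum.ne']
      simp only [hF]
      rw [dot_add_left, dot_comm (Lrho ℓρ _) p, dot_Lrho]
      simp only [mul_sub, mul_add]
      rw [Finset.sum_sub_distrib, Finset.sum_add_distrib, ← Finset.sum_mul, hsum1,
        one_mul, ← Finset.sum_mul, hsum1, one_mul]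
    calc ((dot (θ + Lrho ℓρ fun t => w t / ∑ t', w t') p : ℝ) : EReal) - Ω p
        = (((dot (θ + Lrho ℓρ fun t => w t / ∑ t', w t') p - (Ω p).toReal : ℝ)) : EReal) := by
          rw [EReal.coe_sub, EReal.coe_toReal hp (hbot p)]
      _ ≤ (((V + ε : ℝ)) : EReal) := by
          rw [EReal.coe_le_coe_iff, ← h4]; exact h3
end S3

section S4
variable {ϱ N : ℕ} {Ω : E ϱ → EReal} {ℓρ : Fin N → E ϱ}

/-- Lower semicontinuity of the convolutional negentropy. -/
lemma OmegaT_lsc (hN : 0 < N) (hbot : ∀ p, Ω p ≠ ⊥) (hlsc : LowerSemicontinuous Ω) :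
    LowerSemicontinuous (OmegaT Ω ℓρ) := by
  intro q₀ y hy
  rcases eq_or_ne y ⊥ with rfl | hyb
  · filter_upwards with q
    exact Ne.bot_lt (OmegaT_ne_bot hbot q)
  have hyt : y ≠ ⊤ := hy.ne_top
  set r : ℝ := y.toReal with hr
  have hyr : y = (r : EReal) := (EReal.coe_toReal hyt hyb).symm
  -- choose ε with ↑(r - Tfun q₀ + 2ε) ≤ Ω q₀
  obtain ⟨ε, hεpos, hεle⟩ :
      ∃ ε : ℝ, 0 < ε ∧ ((r - Tfun ℓρ q₀ + 2 * ε : ℝ) : EReal) ≤ Ω q₀ := by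
    rcases eq_or_ne (Ω q₀) ⊤ with hΩ | hΩ
    · exact ⟨1, one_pos, by rw [hΩ]; exact le_top⟩
    · have h1 : ((r : ℝ) : EReal) < OmegaT Ω ℓρ q₀ := by rw [← hyr]; exact hy
      rw [OmegaT_eq_coe hbot hΩ, EReal.coe_lt_coe_iff] at h1
      refine ⟨((Ω q₀).toReal - (r - Tfun ℓρ q₀)) / 3, by linarith, ?_⟩
      rw [← EReal.coe_toReal hΩ (hbot q₀), EReal.coe_le_coe_iff]
      simp only [EReal.toReal_coe]
      linarith
  -- lower semicontinuity of Ω at level r - T q₀ + ε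
  have h2 : ((r - Tfun ℓρ q₀ + ε : ℝ) : EReal) < Ω q₀ :=
    lt_of_lt_of_le (EReal.coe_lt_coe_iff.2 (by linarith)) hεle
  have hΩev := hlsc q₀ _ h2
  -- upper semicontinuity of the min: eventually Tfun q > Tfun q₀ - ε
  obtain ⟨t₀, ht₀⟩ := exists_min_dot hN ℓρ q₀
  have hTq₀ : Tfun ℓρ q₀ = - dot q₀ (ℓρ t₀) := by rw [Tfun, ciInf_fin_eq ht₀]
  have hcont : Continuous fun q : E ϱ => dot q (ℓρ t₀) := by
    apply continuous_finset_sum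
    intro i _
    exact ((continuous_apply i).comp (PiLp.continuous_ofLp (p := 2) (β := fun _ : Fin ϱ => ℝ))).mul continuous_const
  have hTev : ∀ᶠ q in nhds q₀, Tfun ℓρ q₀ - ε < Tfun ℓρ q := by
    have : ∀ᶠ q in nhds q₀, dot q (ℓρ t₀) < dot q₀ (ℓρ t₀) + ε := by
      have := hcont.continuousAt (x := q₀)
      exact this.eventually_lt continuousAt_const (by linarith)
    filter_upwards [this] with q hq
    have hle : - Tfun ℓρ q ≤ dot q (ℓρ t₀) := by
      have : Nonempty (Fin N) := ⟨⟨0, hN⟩⟩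
      simpa [Tfun] using ciInf_le (Set.Finite.bddBelow (Set.finite_range _)) t₀
    rw [hTq₀]
    linarith
  filter_upwards [hΩev, hTev] with q hq1 hq2
  rw [hyr]
  calc ((r : ℝ) : EReal) = ((r - Tfun ℓρ q₀ + ε : ℝ) : EReal)
        + ((Tfun ℓρ q₀ - ε : ℝ) : EReal) := by rw [← EReal.coe_add]; norm_num
    _ < Ω q + ((Tfun ℓρ q : ℝ) : EReal) := by
        apply EReal.add_lt_add_of_lt_of_le hq1 (EReal.coe_le_coe_iff.2 hq2.le) ?_ ?_
        · exact EReal.coe_ne_bot _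
        · exact EReal.coe_ne_top _
    _ = OmegaT Ω ℓρ q := rfl

/-- The epigraph of `Ω_T`. -/
def epiOT (Ω : E ϱ → EReal) (ℓρ : Fin N → E ϱ) : Set (E ϱ × ℝ) :=
  {z | OmegaT Ω ℓρ z.1 ≤ ((z.2 : ℝ) : EReal)}

lemma epiOT_closed (hN : 0 < N) (hbot : ∀ p, Ω p ≠ ⊥) (hlsc : LowerSemicontinuous Ω) :
    IsClosed (epiOT Ω ℓρ) := by
  have hl := OmegaT_lsc (ℓρ := ℓρ) hN hbot hlsc
  rw [← isOpen_compl_iff]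
  rw [isOpen_iff_mem_nhds]
  rintro ⟨q, α⟩ hqa
  simp only [epiOT, Set.mem_compl_iff, Set.mem_setOf_eq, not_le] at hqa
  -- pick β with α < β and ↑β < OmegaT q
  obtain ⟨β, hαβ, hβ⟩ : ∃ β : ℝ, α < β ∧ ((β : ℝ) : EReal) < OmegaT Ω ℓρ q := by
    rcases eq_or_ne (OmegaT Ω ℓρ q) ⊤ with h | h
    · exact ⟨α + 1, by linarith, by rw [h]; exact EReal.coe_lt_top _⟩
    · have hne : OmegaT Ω ℓρ q ≠ ⊥ := OmegaT_ne_bot hbot q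
      refine ⟨(α + (OmegaT Ω ℓρ q).toReal) / 2, ?_, ?_⟩
      · have := hqa
        rw [← EReal.coe_toReal h hne, EReal.coe_lt_coe_iff] at this
        linarith
      · rw [← EReal.coe_toReal h hne, EReal.coe_lt_coe_iff]
        simp only [EReal.toReal_coe]
        have := hqa
        rw [← EReal.coe_toReal h hne, EReal.coe_lt_coe_iff] at this
        linarith
  have hev := hl q _ hβ
  rw [nhds_prod_eq]
  refine Filter.mem_of_superset (Filter.prod_mem_prod hev (Iio_mem_nhds hαβ)) ?_
  rintro ⟨q', α'⟩ ⟨h1, h2⟩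
  simp only [Set.mem_compl_iff, epiOT, Set.mem_setOf_eq, not_le]
  exact lt_trans (EReal.coe_lt_coe_iff.2 h2) h1

lemma epiOT_convex (hN : 0 < N) (hbot : ∀ p, Ω p ≠ ⊥) (hconv : ErealConvex Ω) :
    Convex ℝ (epiOT Ω ℓρ) := by
  rintro ⟨p, α⟩ hp ⟨q, β⟩ hq a b ha hb hab
  simp only [epiOT, Set.mem_setOf_eq] at hp hq ⊢
  have hptop : Ω p ≠ ⊤ := (OmegaT_ne_top_iff p).1 (fun h => by rw [h] at hp; simp at hp)
  have hqtop : Ω q ≠ ⊤ := (OmegaT_ne_top_iff q).1 (fun h => by rw [h] at hq; simp at hq)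
  rw [OmegaT_eq_coe hbot hptop, EReal.coe_le_coe_iff] at hp
  rw [OmegaT_eq_coe hbot hqtop, EReal.coe_le_coe_iff] at hq
  have hcomb := hconv p q a b ha hb hab
  rw [← EReal.coe_toReal hptop (hbot p), ← EReal.coe_toReal hqtop (hbot q),
    ← EReal.coe_mul, ← EReal.coe_mul, ← EReal.coe_add] at hcomb
  have hctop : Ω (a • p + b • q) ≠ ⊤ :=
    fun h => (EReal.coe_ne_top _) (top_le_iff.1 (h ▸ hcomb))
  have hcr : (Ω (a • p + b • q)).toReal ≤ a * (Ω p).toReal + b * (Ω q).toReal :=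
    toReal_le_of_le_coe hcomb (hbot _)
  have hT := Tfun_convex hN ℓρ p q ha hb
  have hfst : (a • (p, α) + b • (q, β)).1 = a • p + b • q := rfl
  have hsnd : (a • (p, α) + b • (q, β)).2 = a * α + b * β := rfl
  rw [hfst, hsnd, OmegaT_eq_coe hbot hctop, EReal.coe_le_coe_iff]
  nlinarith [mul_le_mul_of_nonneg_left hp ha, mul_le_mul_of_nonneg_left hq hb]

/-- Fenchel–Moreau type lower bound at a point of the domain. -/
lemma exists_theta_fm (hN : 0 < N) (hbot : ∀ p, Ω p ≠ ⊥) (hproper : ∃ p, Ω p ≠ ⊤)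
    (hconv : ErealConvex Ω) (hlsc : LowerSemicontinuous Ω)
    (hstar : ∀ ξ : E ϱ, conj Ω ξ ≠ ⊤)
    {pb : E ϱ} (hpb : Ω pb ≠ ⊤) {r : ℝ} (hr : r < (OmegaT Ω ℓρ pb).toReal) :
    ∃ θ' : E ϱ, r ≤ dot θ' pb - (conj (OmegaT Ω ℓρ) θ').toReal := by
  classical
  set m : ℝ := (OmegaT Ω ℓρ pb).toReal with hm
  have hOTpb : OmegaT Ω ℓρ pb = ((m : ℝ) : EReal) :=
    (EReal.coe_toReal ((OmegaT_ne_top_iff pb).2 hpb) (OmegaT_ne_bot hbot pb)).symm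
  have hnotmem : ((pb, r) : E ϱ × ℝ) ∉ epiOT Ω ℓρ := by
    simp only [epiOT, Set.mem_setOf_eq, not_le, hOTpb]
    exact EReal.coe_lt_coe_iff.2 hr
  obtain ⟨f, u, hfA, hfx⟩ :=
    geometric_hahn_banach_closed_point (epiOT_convex hN hbot hconv)
      (epiOT_closed hN hbot hlsc) hnotmem
  -- decompose f
  set g : E ϱ → ℝ := fun q => f (q, 0) with hg
  set s : ℝ := f (0, 1) with hsdef
  have hdecomp : ∀ (q : E ϱ) (α : ℝ), f (q, α) = g q + α * s := by
    intro q α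
    have : (q, α) = (q, (0:ℝ)) + α • ((0 : E ϱ), (1:ℝ)) := by
      simp [Prod.ext_iff]
    rw [this, map_add, map_smul]
    simp [hg, hsdef]
  -- membership of (pb, m + n)
  have hmem : ∀ n : ℝ, 0 ≤ n → ((pb, m + n) : E ϱ × ℝ) ∈ epiOT Ω ℓρ := by
    intro n hn
    simp only [epiOT, Set.mem_setOf_eq, hOTpb]
    exact EReal.coe_le_coe_iff.2 (by linarith)
  have hs0 : s ≤ 0 := by
    by_contra hs
    push_neg at hs
    set n : ℝ := max 0 ((u - g pb - m * s) / s) with hn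
    have hn0 : 0 ≤ n := le_max_left _ _
    have h1 := hfA _ (hmem n hn0)
    rw [hdecomp] at h1
    have hge : (u - g pb - m * s) / s ≤ n := le_max_right _ _
    have : u - g pb - m * s ≤ n * s := by
      rw [← div_mul_cancel₀ (u - g pb - m * s) hs.ne']
      exact mul_le_mul_of_nonneg_right hge hs.le
    nlinarith
  have hms : g pb + m * s < u := by
    have := hfA _ (hmem 0 le_rfl)
    rw [hdecomp] at this
    simpa using this
  have hfx' : u < g pb + r * s := by
    have := hfx
    rw [hdecomp] at this
    exact this
  have hsneg : s < 0 := by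
    have hne : s ≠ 0 := by
      intro h0
      rw [h0] at hms hfx'
      simp at hms hfx'
      linarith
    exact lt_of_le_of_ne hs0 hne
  set lam : ℝ := (-s)⁻¹ with hlam
  have hlampos : 0 < lam := inv_pos.2 (by linarith)
  have hlams : lam * s = -1 := by
    rw [hlam]
    field_simp
    rw [div_self hsneg.ne]
  -- represent g as a dot product
  obtain ⟨v, hvrep⟩ : ∃ v : E ϱ, ∀ q : E ϱ, g q = ∑ i, v i * q i := by
    set gL : E ϱ →L[ℝ] ℝ := f.comp (ContinuousLinearMap.inl ℝ (E ϱ) ℝ) with hgL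
    refine ⟨(InnerProductSpace.toDual ℝ (E ϱ)).symm gL, fun q => ?_⟩
    have h := InnerProductSpace.toDual_symm_apply (𝕜 := ℝ) (E := E ϱ) (x := q) (y := gL)
    have hgLq : gL q = g q := rfl
    rw [← hgLq, ← h, PiLp.inner_apply]
    simp [RCLike.inner_apply, mul_comm]
  set θ' : E ϱ := lam • v with hθ'
  have hdotθ' : ∀ q : E ϱ, dot θ' q = lam * g q := by
    intro q
    rw [hθ', dot_smul_left, hvrep]
    rfl
  have hconjle : (conj (OmegaT Ω ℓρ) θ').toReal ≤ lam * u := by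
    refine toReal_le_of_le_coe ?_ (conjOmegaT_ne_bot hbot hproper θ')
    refine conj_le fun p hp => ?_
    have hΩp : Ω p ≠ ⊤ := (OmegaT_ne_top_iff p).1 hp
    have hOTreal : OmegaT Ω ℓρ p = (((OmegaT Ω ℓρ p).toReal : ℝ) : EReal) :=
      (EReal.coe_toReal hp (OmegaT_ne_bot hbot p)).symm
    have hmemp : ((p, (OmegaT Ω ℓρ p).toReal) : E ϱ × ℝ) ∈ epiOT Ω ℓρ := by
      simp only [epiOT, Set.mem_setOf_eq]
      exact EReal.le_coe_toReal hp
    have h1 := hfA _ hmemp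
    rw [hdecomp] at h1
    have h2 : dot θ' p - (OmegaT Ω ℓρ p).toReal ≤ lam * u := by
      rw [hdotθ']
      have := mul_lt_mul_of_pos_left h1 hlampos
      rw [mul_add] at this
      have heq : lam * ((OmegaT Ω ℓρ p).toReal * s) = -(OmegaT Ω ℓρ p).toReal := by
        rw [show lam * ((OmegaT Ω ℓρ p).toReal * s) = (lam * s) * (OmegaT Ω ℓρ p).toReal by ring,
          hlams]
        ring
      rw [heq] at this
      linarith
    calc ((dot θ' p : ℝ) : EReal) - OmegaT Ω ℓρ p
        = (((dot θ' p - (OmegaT Ω ℓρ p).toReal : ℝ)) : EReal) := by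
          rw [EReal.coe_sub, hOTreal, EReal.toReal_coe]
      _ ≤ (((lam * u : ℝ)) : EReal) := EReal.coe_le_coe_iff.2 h2
  refine ⟨θ', ?_⟩
  have h3 : lam * u < dot θ' pb - r := by
    rw [hdotθ']
    have := mul_lt_mul_of_pos_left hfx' hlampos
    rw [mul_add] at this
    have heq : lam * (r * s) = -r := by
      rw [show lam * (r * s) = (lam * s) * r by ring, hlams]; ring
    rw [heq] at this
    linarith
  linarith
end S4

lemma le_toReal_of_coe_le {x : EReal} {r : ℝ} (h : (r : EReal) ≤ x) (ht : x ≠ ⊤) :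
    r ≤ x.toReal := by
  have := EReal.toReal_le_toReal h (EReal.coe_ne_bot r) ht
  rwa [EReal.toReal_coe] at this


/-- Additive decomposition of the surrogate regret: for every `θ`, `π ∈ Π(θ)`, `η ∈ Δ^K`,
`Regret_{L_{Ω_T}}(θ,η)` equals the (nonnegative) Fenchel–Young loss of Ω at
`(θ + L^ρ π, p̄)` plus the convex combination `Σ_t π_t Regret_ℓ(t,η)`. -/
theorem additive_regret_decomposition
    {K N ϱ : ℕ} (hK : 0 < K) (hN : 0 < N) (hϱ : 0 < ϱ)
    (Ω : E ϱ → EReal) (ρ : Fin K → E ϱ) (ℓρ : Fin N → E ϱ)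
    (ℓ : Fin N → Fin K → ℝ) (c : Fin K → ℝ)
    (hdec : ∀ t y, ℓ t y = dot (ρ y) (ℓρ t) + c y)
    (hcond : Condition1 Ω ρ) :
    ∀ θ : E ϱ, ∀ π ∈ Pii Ω ℓρ θ, ∀ η ∈ stdSimplex ℝ (Fin K),
      0 ≤ (Ω (∑ y, η y • ρ y)).toReal + starFn Ω (θ + Lrho ℓρ π)
          - dot (θ + Lrho ℓρ π) (∑ y, η y • ρ y) ∧
      RegSur Ω ρ ℓρ θ η
        = ((Ω (∑ y, η y • ρ y)).toReal + starFn Ω (θ + Lrho ℓρ π)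
            - dot (θ + Lrho ℓρ π) (∑ y, η y • ρ y))
          + ∑ t, π t * RegTar ℓ t η := by
  intro θ π hpiP η hη
  obtain ⟨hbot, hproper, hconv, hlsc, hdom, hstar⟩ := hcond
  obtain ⟨hπs, hπmin⟩ := hpiP
  set pb : E ϱ := ∑ y, η y • ρ y with hpbdef
  -- pb is in the domain
  have hpbmem : pb ∈ convexHull ℝ (Set.range ρ) := by
    have := Finset.centerMass_mem_convexHull (Finset.univ : Finset (Fin K))
      (fun y _ => hη.1 y) (by rw [hη.2]; norm_num)
      (fun y _ => Set.mem_range_self (f := ρ) y)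
    rwa [Finset.centerMass_eq_of_sum_1 _ ρ hη.2] at this
  have hΩpbtop : Ω pb ≠ ⊤ := hdom hpbmem
  have hρtop : ∀ y, Ω (ρ y) ≠ ⊤ :=
    fun y => hdom (subset_convexHull ℝ _ (Set.mem_range_self y))
  -- key quantities
  set b : ℝ := (conj Ω (θ + Lrho ℓρ π)).toReal with hbdef
  set V : ℝ := (conj (OmegaT Ω ℓρ) θ).toReal with hVdef
  have hbc : ((b : ℝ) : EReal) = conj Ω (θ + Lrho ℓρ π) :=
    EReal.coe_toReal (hstar _) (conj_ne_bot hbot hproper _)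
  -- b = V  (inf-convolution duality)
  have hbV : b = V := by
    refine le_antisymm ?_ ?_
    · refine le_of_forall_pos_le_add fun ε hε => ?_
      obtain ⟨π', hπ's, hπ'le⟩ := exists_pi_conj_le hN hbot hproper hconv hstar θ hε
      have h1 : conj Ω (θ + Lrho ℓρ π) ≤ (((V + ε : ℝ)) : EReal) :=
        le_trans (hπmin π' hπ's) hπ'le
      exact toReal_le_of_le_coe h1 (conj_ne_bot hbot hproper _)
    · have h1 := conjOmegaT_le (ℓρ := ℓρ) hN hbot θ hπs
      have := EReal.toReal_le_toReal h1 (conjOmegaT_ne_bot hbot hproper θ) (hstar _)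
      exact this
  -- the Bayes surrogate risk
  set m : ℝ := (OmegaT Ω ℓρ pb).toReal with hmdef
  have hOTpb : OmegaT Ω ℓρ pb = ((m : ℝ) : EReal) :=
    (EReal.coe_toReal ((OmegaT_ne_top_iff pb).2 hΩpbtop) (OmegaT_ne_bot hbot pb)).symm
  have hmsplit : m = (Ω pb).toReal + Tfun ℓρ pb := by
    rw [hmdef, OmegaT_eq_coe hbot hΩpbtop, EReal.toReal_coe]
  set C : ℝ := ∑ y, η y * (OmegaT Ω ℓρ (ρ y)).toReal with hCdef
  have hRs : ∀ θ' : E ϱ, RsurL Ω ρ ℓρ θ' η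
      = (conj (OmegaT Ω ℓρ) θ').toReal + C - dot θ' pb := by
    intro θ'
    simp only [RsurL, LossFY, mul_sub, mul_add]
    rw [Finset.sum_sub_distrib, Finset.sum_add_distrib, ← Finset.sum_mul, hη.2, one_mul,
      hpbdef, dot_sum_right, hCdef]
  have hlow : ∀ θ' : E ϱ, C - m ≤ RsurL Ω ρ ℓρ θ' η := by
    intro θ'
    have h1 := le_conj (f := OmegaT Ω ℓρ) θ' ((OmegaT_ne_top_iff pb).2 hΩpbtop)
    rw [hOTpb, ← EReal.coe_sub] at h1
    have h2 : dot θ' pb - m ≤ (conj (OmegaT Ω ℓρ) θ').toReal :=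
      le_toReal_of_coe_le h1 (conjOmegaT_ne_top hN hbot hstar θ')
    rw [hRs θ']
    linarith
  have hbdd : BddBelow (Set.range fun θ' : E ϱ => RsurL Ω ρ ℓρ θ' η) := by
    refine ⟨C - m, ?_⟩
    rintro x ⟨θ'', rfl⟩
    exact hlow θ''
  have hinf : (⨅ θ' : E ϱ, RsurL Ω ρ ℓρ θ' η) = C - m := by
    refine le_antisymm ?_ (le_ciInf hlow)
    refine le_of_forall_pos_le_add fun ε hε => ?_
    have hfm : m - ε < (OmegaT Ω ℓρ pb).toReal := by rw [← hmdef]; linarith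
    obtain ⟨θ', hθ'⟩ := exists_theta_fm hN hbot hproper hconv hlsc hstar hΩpbtop hfm
    calc (⨅ θ'' : E ϱ, RsurL Ω ρ ℓρ θ'' η) ≤ RsurL Ω ρ ℓρ θ' η := ciInf_le hbdd θ'
      _ ≤ C - m + ε := by rw [hRs θ']; linarith
  -- the target side
  set cb : ℝ := ∑ y, η y * c y with hcbdef
  have hlt : ∀ t, (∑ y, η y * ℓ t y) = dot pb (ℓρ t) + cb := by
    intro t
    simp only [hdec, mul_add]
    rw [Finset.sum_add_distrib, hpbdef, dot_sum_left, hcbdef]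
  obtain ⟨t₀, ht₀⟩ := exists_min_dot hN ℓρ pb
  have hTpb : Tfun ℓρ pb = - dot pb (ℓρ t₀) := by rw [Tfun, ciInf_fin_eq ht₀]
  have hinfT : (⨅ t' : Fin N, ∑ y, η y * ℓ t' y) = dot pb (ℓρ t₀) + cb := by
    have hmin : ∀ t, (∑ y, η y * ℓ t₀ y) ≤ ∑ y, η y * ℓ t y := by
      intro t
      rw [hlt, hlt]
      exact add_le_add_left (ht₀ t) cb
    rw [ciInf_fin_eq hmin, hlt]
  have hRegTar : ∀ t, RegTar ℓ t η = dot pb (ℓρ t) - dot pb (ℓρ t₀) := by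
    intro t
    rw [RegTar, hinfT, hlt]
    ring
  have hsumtar : (∑ t, π t * RegTar ℓ t η) = dot pb (Lrho ℓρ π) - dot pb (ℓρ t₀) := by
    simp only [hRegTar, mul_sub]
    rw [Finset.sum_sub_distrib, ← dot_Lrho, ← Finset.sum_mul, hπs.2, one_mul]
  -- nonnegativity via Fenchel–Young
  have hΩpbreal : Ω pb = (((Ω pb).toReal : ℝ) : EReal) :=
    (EReal.coe_toReal hΩpbtop (hbot pb)).symm
  have hFY : dot (θ + Lrho ℓρ π) pb - (Ω pb).toReal ≤ b := by
    have h1 := le_conj (f := Ω) (θ + Lrho ℓρ π) hΩpbtop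
    rw [hΩpbreal, ← EReal.coe_sub, ← hbc, EReal.coe_le_coe_iff] at h1
    exact h1
  have hstarb : starFn Ω (θ + Lrho ℓρ π) = b := rfl
  constructor
  · rw [hstarb]
    linarith
  · rw [RegSur, hinf, hRs θ, hsumtar, hstarb]
    have hdd : dot (θ + Lrho ℓρ π) pb = dot θ pb + dot pb (Lrho ℓρ π) := by
      rw [dot_add_left, dot_comm (Lrho ℓρ π) pb]
    rw [hdd, ← hVdef, hbV, hmsplit, hTpb]
    ring
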